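/- arXiv:2108.08716 — 2 statements merged into one kernel-verified Lean document; each statement's English description precedes it below -/
import Mathlib

section
/- Let F be a finite field with q elements, let n ≥ 1 be an integer, and let α_1, …, α_n be nonzero elements of F. For every integer w with 1 ≤ w ≤ n, the number of vectors x ∈ F^n of Hamming weight w satisfying the single parity-check equation α_1 x_1 + ⋯ + α_n x_n = 0 equals binom(n, w) · ((q−1)^w + (q−1)(−1)^w)/q; in particular, this number does not depend on the choice of the nonzero coefficients α_1, …, α_n. -/
/-!
Scaling the `i`-th coordinate by `α i` is a weight-preserving permutation of `F^n`, so we may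
take all `α i = 1`. Grouping vectors by their support, one of the `binom(n, w)` subsets of size
`w`, the count becomes `binom(n, w) · A w`, where `A m` counts the nowhere-zero vectors of `F^m`
with zero sum. Dropping one coordinate, which is forced to be minus the sum of the others, gives
`A (m + 1) + A m = (q - 1)^m`, and with `A 0 = 1` this recursion solves to
`A m = ((q - 1)^m + (q - 1)(-1)^m) / q`.
-/

/-- The Hamming weight of a vector: the number of nonzero coordinates. -/
def hammingWt {n : ℕ} {F : Type*} [Zero F] [DecidableEq F] (x : Fin n → F) : ℕ :=
  (Finset.univ.filter (fun i => x i ≠ 0)).card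

open Finset

def nowhereZeroZeroSum (ι M : Type*) [Fintype ι] [DecidableEq ι] [AddCommMonoid M] [Fintype M]
    [DecidableEq M] : Finset (ι → M) :=
  {z | (∀ i, z i ≠ 0) ∧ ∑ i, z i = 0}

section AddCommMonoid

variable {M : Type*} [AddCommMonoid M] [Fintype M] [DecidableEq M]

theorem card_nowhereZeroZeroSum_congr {ι κ : Type*} [Fintype ι] [DecidableEq ι] [Fintype κ]
    [DecidableEq κ] (e : ι ≃ κ) :
    #(nowhereZeroZeroSum ι M) = #(nowhereZeroZeroSum κ M) :=
  card_equiv (e.arrowCongr (Equiv.refl M)) fun z => by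
    simp [nowhereZeroZeroSum, ← e.symm.sum_comp,
      e.symm.forall_congr_right (q := fun i => z i ≠ 0)]

theorem card_support_eq_sum_eq_zero {ι : Type*} [Fintype ι] [DecidableEq ι] (S : Finset ι) :
    #{x : ι → M | ({i | x i ≠ 0} : Finset ι) = S ∧ ∑ i, x i = 0}
      = #(nowhereZeroZeroSum S M) := by
  refine card_nbij' (fun x i => x i) (fun z i => if h : i ∈ S then z ⟨i, h⟩ else 0)
    ?_ ?_ ?_ ?_
  · intro x hx
    simp only [mem_coe, mem_filter, mem_univ, true_and] at hx
    obtain ⟨rfl, hsum⟩ := hx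
    simp only [nowhereZeroZeroSum, mem_coe, mem_filter, mem_univ, true_and]
    refine ⟨fun i => (mem_filter.1 i.2).2, ?_⟩
    rwa [sum_coe_sort, sum_subset (subset_univ _) fun i _ hi => by simpa using hi]
  · intro z hz
    simp only [nowhereZeroZeroSum, mem_coe, mem_filter, mem_univ, true_and] at hz ⊢
    obtain ⟨hz0, hsum⟩ := hz
    constructor
    · ext i
      by_cases h : i ∈ S <;> simp [h, hz0]
    · rw [← sum_subset (subset_univ S) fun i _ hi => dif_neg hi, ← sum_coe_sort, ← hsum]
      simp
  · intro x hx
    simp only [mem_coe, mem_filter, mem_univ, true_and] at hx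
    obtain ⟨rfl, -⟩ := hx
    ext i
    by_cases h : x i = 0 <;> simp [h]
  · intro z _
    simp

theorem card_hammingWt_sum_eq_zero (n w : ℕ) :
    #{x : Fin n → M | hammingWt x = w ∧ ∑ i, x i = 0}
      = n.choose w * #(nowhereZeroZeroSum (Fin w) M) := by
  rw [card_eq_sum_card_fiberwise (f := fun x => ({i | x i ≠ 0} : Finset (Fin n)))
      (t := powersetCard w univ) fun x hx => by simp_all [hammingWt],
    sum_const_nat, card_powersetCard, card_univ, Fintype.card_fin]
  intro S hS
  rw [mem_powersetCard_univ] at hS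
  rw [filter_filter, ← card_nowhereZeroZeroSum_congr (S.equivFinOfCardEq hS),
    ← card_support_eq_sum_eq_zero]
  congr 1
  ext x
  simp only [mem_filter, mem_univ, true_and]
  constructor
  · exact fun ⟨⟨_, hsum⟩, hxS⟩ => ⟨hxS, hsum⟩
  · exact fun ⟨hxS, hsum⟩ => ⟨⟨by rw [hammingWt, hxS, hS], hsum⟩, hxS⟩

end AddCommMonoid

section AddCommGroup

variable {G : Type*} [AddCommGroup G] [Fintype G] [DecidableEq G]

theorem card_nowhereZeroZeroSum_succ_add (m : ℕ) :
    #(nowhereZeroZeroSum (Fin (m + 1)) G) + #(nowhereZeroZeroSum (Fin m) G)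
      = (Fintype.card G - 1) ^ m := by
  have hcons : #(nowhereZeroZeroSum (Fin (m + 1)) G)
      = #{z : Fin m → G | (∀ i, z i ≠ 0) ∧ ∑ i, z i ≠ 0} := by
    refine card_nbij' Fin.tail (fun y => Fin.cons (-∑ i, y i) y) ?_ ?_ ?_ ?_
    · intro x hx
      simp only [nowhereZeroZeroSum, mem_coe, mem_filter, mem_univ, true_and,
        Fin.forall_fin_succ, Fin.sum_univ_succ, Fin.tail] at hx ⊢
      obtain ⟨⟨hx0, hxs⟩, hsum⟩ := hx
      exact ⟨hxs, fun h => hx0 (by rwa [h, add_zero] at hsum)⟩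
    · intro y hy
      simp only [nowhereZeroZeroSum, mem_coe, mem_filter, mem_univ, true_and,
        Fin.forall_fin_succ, Fin.sum_univ_succ] at hy ⊢
      simpa [and_comm] using hy
    · intro x hx
      simp only [nowhereZeroZeroSum, mem_coe, mem_filter, mem_univ, true_and,
        Fin.sum_univ_succ] at hx
      rw [← Fin.cons_self_tail x, eq_neg_of_add_eq_zero_left hx.2]
      rfl
    · intro y _
      simp
  have hnowhere : #{z : Fin m → G | ∀ i, z i ≠ 0} = (Fintype.card G - 1) ^ m := by
    have : ({z | ∀ i, z i ≠ 0} : Finset (Fin m → G)) = Fintype.piFinset fun _ => {0}ᶜ := by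
      ext; simp
    simp [this, Fintype.card_piFinset, card_compl]
  rw [hcons, ← hnowhere, nowhereZeroZeroSum, ← filter_filter, ← filter_filter, add_comm]
  convert card_filter_add_card_filter_not (fun z : Fin m → G => ∑ i, z i = 0)

theorem card_nowhereZeroZeroSum_fin (m : ℕ) :
    (#(nowhereZeroZeroSum (Fin m) G) : ℚ)
      = (((Fintype.card G : ℚ) - 1) ^ m + ((Fintype.card G : ℚ) - 1) * (-1) ^ m)
        / Fintype.card G := by
  have hq : (Fintype.card G : ℚ) ≠ 0 := by positivity
  induction m with
  | zero =>
    have : nowhereZeroZeroSum (Fin 0) G = univ := by ext; simp [nowhereZeroZeroSum]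
    simp [this]
  | succ m ih =>
    have hrec := card_nowhereZeroZeroSum_succ_add (G := G) m
    have : (#(nowhereZeroZeroSum (Fin (m + 1)) G) : ℚ)
        = ((Fintype.card G : ℚ) - 1) ^ m - #(nowhereZeroZeroSum (Fin m) G) := by
      rw [eq_sub_iff_add_eq, ← Nat.cast_add, hrec, Nat.cast_pow, Nat.cast_pred Fintype.card_pos]
    rw [this, ih]
    field_simp
    ring

end AddCommGroup

theorem card_hammingWt_weighted_sum_eq_zero {F : Type*} [DivisionRing F] [Fintype F]
    [DecidableEq F] {n : ℕ} {α : Fin n → F} (hα : ∀ i, α i ≠ 0) (w : ℕ) :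
    #{x : Fin n → F | hammingWt x = w ∧ ∑ i, α i * x i = 0}
      = #{x : Fin n → F | hammingWt x = w ∧ ∑ i, x i = 0} :=
  card_equiv (Equiv.piCongrRight fun i => Equiv.mulLeft₀ (α i) (hα i)) fun x => by
    simp [hammingWt, hα]

theorem stmt_3_general (F : Type*) [Field F] [Fintype F] [DecidableEq F]
    (q : ℕ) (hq : Fintype.card F = q) (n : ℕ)
    (α : Fin n → F) (hα : ∀ i, α i ≠ 0)
    (w : ℕ) :
    ((Finset.univ.filter
        (fun x : Fin n → F => hammingWt x = w ∧ ∑ i, α i * x i = 0)).card : ℚ)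
      = (n.choose w : ℚ) * ((((q : ℚ) - 1) ^ w + ((q : ℚ) - 1) * (-1) ^ w) / q) := by
  subst hq
  rw [card_hammingWt_weighted_sum_eq_zero hα, card_hammingWt_sum_eq_zero, Nat.cast_mul,
    card_nowhereZeroZeroSum_fin]

/-- Let `F` be a finite field with `q` elements, `n ≥ 1`, and `α 1, …, α n` nonzero elements
of `F`. For every `1 ≤ w ≤ n`, the number of vectors `x ∈ F^n` of Hamming weight `w`
satisfying the single parity check `∑ i, α i * x i = 0` equals
`binom(n,w) * ((q-1)^w + (q-1)(-1)^w)/q`; in particular it does not depend on the nonzero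
coefficients `α` (the right-hand side does not mention `α`). -/
theorem stmt_3 (F : Type*) [Field F] [Fintype F] [DecidableEq F]
    (q : ℕ) (hq : Fintype.card F = q) (n : ℕ) (hn : 1 ≤ n)
    (α : Fin n → F) (hα : ∀ i, α i ≠ 0)
    (w : ℕ) (hw1 : 1 ≤ w) (hwn : w ≤ n) :
    ((Finset.univ.filter
        (fun x : Fin n → F => hammingWt x = w ∧ ∑ i, α i * x i = 0)).card : ℚ)
      = (n.choose w : ℚ) * ((((q : ℚ) - 1) ^ w + ((q : ℚ) - 1) * (-1) ^ w) / q) :=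
  stmt_3_general F q hq n α hα w
end

section
/- Let F be a finite field with q elements, let K ≥ 1, L ≥ 1, J ≥ 1 be integers, set N = KL, and let K_1, …, K_J be integers with 1 ≤ K_j ≤ K. Let H be the random (JL)×N matrix over F formed by stacking J independent random strips, where the j-th strip is obtained from the strip pattern with parameters (K, K_j, L) by choosing i.i.d. uniformly random nonzero labels of F for its ones and independently applying a uniformly random permutation of the N columns (all labels and permutations independent across strips). Then for every integer w with 1 ≤ w ≤ N, the expected number of vectors x ∈ F^N with Hamming weight w and H x = 0 equals (q−1)^{w(1−J)} · binom(N, w)^{1−J} · Π_{j=1}^J f_{j,w}, where f_{j,w} is the coefficient of s^w in f_j(s)^L and f_j(s) = (1/q)·[(1+(q−1)s)^{K_j} + (q−1)(1−s)^{K_j}] · (1+(q−1)s)^{K−K_j}. -/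
open Polynomial

/-- The index `i·L + t` (0-based) of the one in row `t` and occurrence `i` of the strip
pattern, as an element of `Fin (K*L)`. -/
def stripIdx (K L i t : ℕ) (hi : i < K) (ht : t < L) : Fin (K * L) :=
  ⟨i * L + t, by
    calc i * L + t < i * L + L := Nat.add_lt_add_left ht _
      _ = (i + 1) * L := by ring
      _ ≤ K * L := Nat.mul_le_mul_right L hi⟩

/-- `f_j(s) = (1/q)·[(1+(q-1)s)^{K_j} + (q-1)(1-s)^{K_j}] · (1+(q-1)s)^{K-K_j}` as a
polynomial over `ℚ`. -/
noncomputable def fpoly (q K Kj : ℕ) : ℚ[X] :=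
  C ((q : ℚ))⁻¹ * ((1 + C ((q : ℚ) - 1) * X) ^ Kj + C ((q : ℚ) - 1) * (1 - X) ^ Kj) *
    (1 + C ((q : ℚ) - 1) * X) ^ (K - Kj)

/-!
Write `E_j(x)` for the number of samples (labels, permutation) of strip `j` whose checks all
vanish on `x`. By independence of the strips the expected count is
`∑_{wt x = w} ∏_j E_j(x) / |Ω_j|`. Rescaling the labels shows that `E_j(x)` depends only on
the support of `x`, and the uniform column permutation then makes it depend only on `wt x`.
So `E_j(x)` is the average of `E_j` over the weight class `W`, and averaging over the
permutation turns `∑_{x ∈ W} E_j(x)` into `N!` times the number of pairs (labels, `y`) with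
`wt y = w` annihilated by the unpermuted strip: the coefficient of `s^w` in a weight
enumerator. That enumerator is a product over the `L` rows; a row contributes
`(q-1)^{K_j} f_j(s)`, since the nonzero labels can be absorbed into `y`, zero-sum vectors of
`F^{K_j}` have enumerator `((1+(q-1)s)^{K_j} + (q-1)(1-s)^{K_j}) / q`, and the other
`K - K_j` coordinates are free. Finally `|W| = C(N,w) (q-1)^w`.
-/

open Finset

theorem Fin.sum_univ_fun_succ {α M : Type*} [Fintype α] [AddCommMonoid M] {n : ℕ}
    (f : (Fin (n + 1) → α) → M) : ∑ v, f v = ∑ a, ∑ u, f (Fin.cons a u) :=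
  (Fintype.sum_equiv (Fin.consEquiv fun _ => α) _ _ fun _ => rfl).symm.trans
    (Fintype.sum_prod_type _)

theorem Fin.sum_univ_fun_add {α M : Type*} [Fintype α] [AddCommMonoid M] {m n : ℕ}
    (f : (Fin (m + n) → α) → M) : ∑ v, f v = ∑ u, ∑ z, f (Fin.append u z) :=
  (Fintype.sum_equiv (Fin.appendEquiv m n) _ _ fun _ => rfl).symm.trans
    (Fintype.sum_prod_type _)

theorem natCast_card_subtype_ne_zero {F : Type*} [Zero F] [Fintype F] [DecidableEq F] :
    (Fintype.card {a : F // a ≠ 0} : ℚ) = Fintype.card F - 1 := by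
  rw [Fintype.card_subtype_compl, Fintype.card_subtype_eq, Nat.cast_sub Fintype.card_pos,
    Nat.cast_one]

theorem sum_card_filter_forall_of_card_eq {ι V : Type*} [Fintype ι] [DecidableEq ι]
    {Ω : ι → Type*} [∀ i, Fintype (Ω i)] (W : Finset V) (A : ∀ i, Ω i → V → Prop)
    [∀ i ω x, Decidable (A i ω x)]
    (hA : ∀ i, ∀ x ∈ W, ∀ x' ∈ W, #{ω | A i ω x} = #{ω | A i ω x'}) :
    (∑ ω : ∀ i, Ω i, #{x ∈ W | ∀ i, A i (ω i) x} : ℚ) =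
      #W * ∏ i, (∑ ω, #{x ∈ W | A i ω x} : ℚ) / #W := by
  have hfactor : ∀ x ∈ W, ∀ i,
      (#{ω | A i ω x} : ℚ) = (∑ ω, #{x ∈ W | A i ω x} : ℚ) / #W := by
    intro x hx i
    have hW : (#W : ℚ) ≠ 0 := Nat.cast_ne_zero.mpr (card_ne_zero_of_mem hx)
    have hswap : (∑ ω, #{x' ∈ W | A i ω x'} : ℚ) = ∑ x' ∈ W, (#{ω | A i ω x'} : ℚ) := by
      simp only [natCast_card_filter]
      exact sum_comm
    rw [eq_div_iff hW, hswap, sum_congr rfl fun x' hx' => congrArg Nat.cast (hA i x hx x' hx').symm,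
      sum_const, nsmul_eq_mul, mul_comm]
  calc (∑ ω : ∀ i, Ω i, #{x ∈ W | ∀ i, A i (ω i) x} : ℚ)
      = ∑ x ∈ W, ∏ i, (#{ω | A i ω x} : ℚ) := by
        simp only [natCast_card_filter, ← Fintype.prod_boole]
        rw [sum_comm]
        simp only [Fintype.prod_sum]
    _ = ∑ x ∈ W, ∏ i, (∑ ω, #{x ∈ W | A i ω x} : ℚ) / #W :=
        sum_congr rfl fun x hx => prod_congr rfl fun i _ => hfactor x hx i
    _ = _ := by rw [sum_const, nsmul_eq_mul]

section HammingNorm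

variable {β ι : Type*} [Zero β] [DecidableEq β] [Fintype ι]

theorem hammingNorm_comp_perm (x : ι → β) (σ : Equiv.Perm ι) :
    hammingNorm (x ∘ σ) = hammingNorm x :=
  card_equiv σ (by simp)

theorem exists_perm_comp_eq_zero_iff {x y : ι → β} (h : hammingNorm x = hammingNorm y) :
    ∃ τ : Equiv.Perm ι, ∀ p, x (τ p) = 0 ↔ y p = 0 := by
  have hcard : Fintype.card {p // y p ≠ 0} = Fintype.card {p // x p ≠ 0} := by
    simp only [Fintype.card_subtype]
    exact h.symm
  let e := Fintype.equivOfCardEq hcard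
  refine ⟨e.extendSubtype, fun p => ?_⟩
  by_cases hp : y p = 0
  · simpa [hp] using e.extendSubtype_not_mem p (not_not.mpr hp)
  · simpa [hp] using e.extendSubtype_mem p hp

variable {R : Type*} [CommSemiring R]

theorem X_pow_hammingNorm (v : ι → β) :
    (X : R[X]) ^ hammingNorm v = ∏ i, if v i = 0 then 1 else X := by
  rw [prod_ite, prod_const_one, one_mul, prod_const]
  rfl

theorem X_pow_hammingNorm_cons {n : ℕ} (a : β) (u : Fin n → β) :
    (X : R[X]) ^ hammingNorm (Fin.cons a u : Fin (n + 1) → β) =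
      (if a = 0 then 1 else X) * X ^ hammingNorm u := by
  simp only [X_pow_hammingNorm, Fin.prod_univ_succ, Fin.cons_zero, Fin.cons_succ]

theorem X_pow_hammingNorm_append {m n : ℕ} (u : Fin m → β) (z : Fin n → β) :
    (X : R[X]) ^ hammingNorm (Fin.append u z) = X ^ hammingNorm u * X ^ hammingNorm z := by
  simp only [X_pow_hammingNorm, Fin.prod_univ_add, Fin.append_left, Fin.append_right]

end HammingNorm

section WeightEnumerator

variable {F : Type*} [Field F] [Fintype F] [DecidableEq F] {ι : Type*} [Fintype ι]

theorem sum_ite_eq_zero_one_X :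
    ∑ a : F, (if a = 0 then 1 else X : ℚ[X]) = 1 + C ((Fintype.card F : ℚ) - 1) * X := by
  have h : ∀ a : F, (if a = 0 then 1 else X : ℚ[X]) = X + if a = 0 then 1 - X else 0 := by
    intro a; split_ifs <;> ring
  simp only [h, sum_add_distrib, sum_ite_eq', mem_univ, if_true, sum_const, card_univ,
    nsmul_eq_mul, map_sub, map_natCast, map_one]
  ring

variable [DecidableEq ι]

theorem sum_X_pow_hammingNorm :
    ∑ v : ι → F, (X : ℚ[X]) ^ hammingNorm v =
      (1 + C ((Fintype.card F : ℚ) - 1) * X) ^ Fintype.card ι := by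
  simp only [X_pow_hammingNorm]
  rw [← Fintype.prod_sum (fun _ a => if a = 0 then (1 : ℚ[X]) else X)]
  simp only [sum_ite_eq_zero_one_X, prod_const, card_univ]

theorem coeff_sum_C_mul_X_pow_hammingNorm (f : (ι → F) → ℚ) (w : ℕ) :
    (∑ v : ι → F, C (f v) * X ^ hammingNorm v).coeff w =
      ∑ v : ι → F with hammingNorm v = w, f v := by
  simp only [finsetSum_coeff, coeff_C_mul_X_pow, sum_filter, eq_comm]

theorem natCast_card_hammingNorm_eq (w : ℕ) :
    (#{v : ι → F | hammingNorm v = w} : ℚ) =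
      (Fintype.card ι).choose w * ((Fintype.card F : ℚ) - 1) ^ w := by
  have h := coeff_sum_C_mul_X_pow_hammingNorm (F := F) (ι := ι) (fun _ => 1) w
  rw [sum_const, nsmul_one] at h
  have hcomp : (1 + C ((Fintype.card F : ℚ) - 1) * X) ^ Fintype.card ι =
      ((1 + X) ^ Fintype.card ι).comp (C ((Fintype.card F : ℚ) - 1) * X) := by
    simp [pow_comp]
  rw [← h, map_one]
  simp only [one_mul, sum_X_pow_hammingNorm, hcomp, comp_C_mul_X_coeff, coeff_one_add_X_pow]

-- Exactly one first coordinate, `-∑ i, u i`, completes `u` to a zero-sum vector.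
theorem sum_filter_sum_eq_zero_succ {n : ℕ} :
    ∑ v : Fin (n + 1) → F with ∑ i, v i = 0, (X : ℚ[X]) ^ hammingNorm v =
      ∑ u : Fin n → F, (if ∑ i, u i = 0 then 1 else X) * X ^ hammingNorm u := by
  rw [sum_filter, Fin.sum_univ_fun_succ, sum_comm]
  refine sum_congr rfl fun u _ => ?_
  simp only [Fin.sum_cons, X_pow_hammingNorm_cons, ← ite_zero_mul, ← sum_mul]
  congr 1
  rw [sum_eq_single (-∑ i, u i)]
  · simp
  · intro a _ ha
    rw [if_neg (fun h => ha (eq_neg_of_add_eq_zero_left h))]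
  · simp

theorem card_mul_sum_filter_sum_eq_zero (n : ℕ) :
    C (Fintype.card F : ℚ) * ∑ v : Fin n → F with ∑ i, v i = 0, (X : ℚ[X]) ^ hammingNorm v =
      (1 + C ((Fintype.card F : ℚ) - 1) * X) ^ n + C ((Fintype.card F : ℚ) - 1) * (1 - X) ^ n := by
  have hC : C (Fintype.card F : ℚ) = 1 + C ((Fintype.card F : ℚ) - 1) := by
    rw [map_sub, map_one]; ring
  induction n with
  | zero => simp [hammingNorm]
  | succ n ih =>
    have hsplit : ∀ u : Fin n → F, (if ∑ i, u i = 0 then 1 else X : ℚ[X]) * X ^ hammingNorm u =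
        (1 - X) * (if ∑ i, u i = 0 then X ^ hammingNorm u else 0) + X * X ^ hammingNorm u := by
      intro u; split_ifs <;> ring
    rw [sum_filter_sum_eq_zero_succ, sum_congr rfl fun u _ => hsplit u, sum_add_distrib,
      ← mul_sum, ← mul_sum, ← sum_filter, sum_X_pow_hammingNorm, Fintype.card_fin]
    linear_combination (1 - X) * ih + X * (1 + C ((Fintype.card F : ℚ) - 1) * X) ^ n * hC

def nonzeroOrthCount (u : ι → F) : ℕ :=
  #{b : ι → {a : F // a ≠ 0} | ∑ i, (b i : F) * u i = 0}

theorem nonzeroOrthCount_mul (c : ι → F) (hc : ∀ i, c i ≠ 0) (u : ι → F) :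
    nonzeroOrthCount (fun i => c i * u i) = nonzeroOrthCount u := by
  refine card_equiv (Equiv.piCongrRight fun i =>
    (Equiv.mulRight₀ (c i) (hc i)).subtypeEquiv fun a => by simp [hc i]) fun b => ?_
  simp [mul_assoc]

theorem nonzeroOrthCount_congr {u u' : ι → F} (h : ∀ i, u i = 0 ↔ u' i = 0) :
    nonzeroOrthCount u = nonzeroOrthCount u' := by
  set c : ι → F := fun i => if u' i = 0 then 1 else u i / u' i
  have hc : ∀ i, c i ≠ 0 := fun i => by
    by_cases h' : u' i = 0
    · simp [c, h']
    · simp [c, h', (h i).not.mpr h']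
  have hu : u = fun i => c i * u' i := funext fun i => by
    by_cases h' : u' i = 0
    · simp [c, h', (h i).mpr h']
    · simp [c, h']
  rw [hu, nonzeroOrthCount_mul c hc]

theorem sum_nonzeroOrthCount_mul_X_pow :
    ∑ u : ι → F, C (nonzeroOrthCount u : ℚ) * X ^ hammingNorm u =
      C ((Fintype.card F : ℚ) - 1) ^ Fintype.card ι *
        ∑ u : ι → F with ∑ i, u i = 0, (X : ℚ[X]) ^ hammingNorm u := by
  have hscale : ∀ b : ι → {a : F // a ≠ 0},
      ∑ u : ι → F, (if ∑ i, (b i : F) * u i = 0 then (X : ℚ[X]) ^ hammingNorm u else 0) =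
        ∑ u : ι → F with ∑ i, u i = 0, (X : ℚ[X]) ^ hammingNorm u := by
    intro b
    let e : (ι → F) ≃ (ι → F) := Equiv.piCongrRight fun i => Equiv.mulLeft₀ (b i : F) (b i).2
    have he : ∀ u, hammingNorm (e u) = hammingNorm u := fun u =>
      hammingNorm_comp (fun i => ((b i : F) * ·)) (fun i => mul_right_injective₀ (b i).2)
        (fun i => mul_zero _)
    rw [sum_filter]
    exact Fintype.sum_equiv e _ _ fun u => by rw [he]; rfl
  simp only [nonzeroOrthCount, natCast_card_filter, map_sum, apply_ite C, map_one, map_zero,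
    sum_mul, ite_mul, one_mul, zero_mul]
  rw [sum_comm, sum_congr rfl fun b _ => hscale b, sum_const, card_univ, Fintype.card_fun,
    nsmul_eq_mul, Nat.cast_pow, ← map_natCast C, natCast_card_subtype_ne_zero]

end WeightEnumerator

section Strip

variable {F : Type*} [Field F] [Fintype F] [DecidableEq F] {K L k : ℕ}

theorem sum_mul_X_pow_hammingNorm_castLE (hk : k ≤ K) (g : (Fin k → F) → ℚ[X]) :
    ∑ v : Fin K → F, g (fun i => v (Fin.castLE hk i)) * X ^ hammingNorm v =
      (∑ u : Fin k → F, g u * X ^ hammingNorm u) *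
        (1 + C ((Fintype.card F : ℚ) - 1) * X) ^ (K - k) := by
  obtain ⟨m, rfl⟩ := Nat.exists_eq_add_of_le hk
  have hT := sum_X_pow_hammingNorm (F := F) (ι := Fin m)
  rw [Fintype.card_fin] at hT
  rw [Nat.add_sub_cancel_left, ← hT, sum_mul_sum, Fin.sum_univ_fun_add]
  refine sum_congr rfl fun u _ => sum_congr rfl fun z _ => ?_
  rw [X_pow_hammingNorm_append, ← mul_assoc,
    show (fun i => Fin.append u z (Fin.castLE hk i)) = u from funext (Fin.append_left u z)]

theorem sum_nonzeroOrthCount_castLE_mul_X_pow (hk : k ≤ K) :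
    ∑ v : Fin K → F, C (nonzeroOrthCount (fun i => v (Fin.castLE hk i)) : ℚ) * X ^ hammingNorm v =
      C ((Fintype.card F : ℚ) - 1) ^ k * fpoly (Fintype.card F) K k := by
  have hq : (Fintype.card F : ℚ) ≠ 0 := Nat.cast_ne_zero.mpr Fintype.card_ne_zero
  rw [sum_mul_X_pow_hammingNorm_castLE hk (fun u => C (nonzeroOrthCount u : ℚ)),
    sum_nonzeroOrthCount_mul_X_pow, Fintype.card_fin, fpoly,
    ← card_mul_sum_filter_sum_eq_zero, ← mul_assoc (C _), ← C_mul, inv_mul_cancel₀ hq, C_1,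
    one_mul, mul_assoc]

abbrev StripSample (F : Type*) [Zero F] (K L k : ℕ) : Type _ :=
  (Fin L → Fin k → {a : F // a ≠ 0}) × Equiv.Perm (Fin (K * L))

abbrev StripAnnihilates (hk : k ≤ K) (a : Fin L → Fin k → {a : F // a ≠ 0})
    (y : Fin (K * L) → F) : Prop :=
  ∀ t : Fin L, ∑ i : Fin k, (a t i : F) * y (stripIdx K L i t (lt_of_lt_of_le i.isLt hk) t.isLt) = 0

def stripKernelCount (hk : k ≤ K) (y : Fin (K * L) → F) : ℕ :=
  #{a | StripAnnihilates hk a y}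

theorem stripKernelCount_eq_prod (hk : k ≤ K) (y : Fin (K * L) → F) :
    stripKernelCount hk y = ∏ t : Fin L,
      nonzeroOrthCount fun i : Fin k => y (stripIdx K L i t (lt_of_lt_of_le i.isLt hk) t.isLt) := by
  simp only [stripKernelCount, nonzeroOrthCount, card_filter, Fintype.prod_sum,
    Fintype.prod_boole]
  congr!

theorem stripKernelCount_congr (hk : k ≤ K) {y y' : Fin (K * L) → F}
    (h : ∀ p, y p = 0 ↔ y' p = 0) : stripKernelCount hk y = stripKernelCount hk y' := by
  simp only [stripKernelCount_eq_prod]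
  exact prod_congr rfl fun t _ => nonzeroOrthCount_congr fun i => h _

def stripEquiv (K L : ℕ) : Fin L × Fin K ≃ Fin (K * L) :=
  (Equiv.prodComm _ _).trans finProdFinEquiv

theorem stripEquiv_apply (t : Fin L) (i : Fin K) :
    stripEquiv K L (t, i) = stripIdx K L i t i.isLt t.isLt :=
  Fin.ext <| by simp [stripEquiv, stripIdx]; ring

theorem sum_stripKernelCount_mul_X_pow (hk : k ≤ K) :
    ∑ y : Fin (K * L) → F, C (stripKernelCount hk y : ℚ) * X ^ hammingNorm y =
      (C ((Fintype.card F : ℚ) - 1) ^ k * fpoly (Fintype.card F) K k) ^ L := by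
  let E : (Fin L → Fin K → F) ≃ (Fin (K * L) → F) :=
    (Equiv.curry _ _ _).symm.trans ((stripEquiv K L).arrowCongr (Equiv.refl F))
  have hE : ∀ Y t i, E Y (stripEquiv K L (t, i)) = Y t i := fun Y t i => by simp [E]
  have hX : ∀ Y, (X : ℚ[X]) ^ hammingNorm (E Y) = ∏ t, X ^ hammingNorm (Y t) := fun Y => by
    simp only [X_pow_hammingNorm, ← (stripEquiv K L).prod_comp, hE, Fintype.prod_prod_type]
  have hcount : ∀ Y, stripKernelCount hk (E Y) =
      ∏ t, nonzeroOrthCount fun i => Y t (Fin.castLE hk i) := fun Y => by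
    rw [stripKernelCount_eq_prod]
    refine prod_congr rfl fun t _ => congrArg nonzeroOrthCount (funext fun i => ?_)
    rw [← hE Y t (Fin.castLE hk i), stripEquiv_apply]
    rfl
  rw [← sum_nonzeroOrthCount_castLE_mul_X_pow hk, ← Fin.prod_const, Fintype.prod_sum,
    ← E.sum_comp]
  simp only [hX, hcount, Nat.cast_prod, map_prod, ← prod_mul_distrib]

theorem card_filter_stripAnnihilates_comp (hk : k ≤ K) (x : Fin (K * L) → F) :
    #{ω : StripSample F K L k | StripAnnihilates hk ω.1 (x ∘ ω.2)} =
      ∑ σ : Equiv.Perm (Fin (K * L)), stripKernelCount hk (x ∘ σ) := by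
  simp only [card_filter, stripKernelCount, Fintype.sum_prod_type_right]

theorem card_filter_stripAnnihilates_comp_congr (hk : k ≤ K) {x x' : Fin (K * L) → F}
    (h : hammingNorm x = hammingNorm x') :
    #{ω : StripSample F K L k | StripAnnihilates hk ω.1 (x ∘ ω.2)} =
      #{ω : StripSample F K L k | StripAnnihilates hk ω.1 (x' ∘ ω.2)} := by
  obtain ⟨τ, hτ⟩ := exists_perm_comp_eq_zero_iff h
  rw [card_filter_stripAnnihilates_comp, card_filter_stripAnnihilates_comp,
    ← Equiv.sum_comp (Equiv.mulLeft τ)]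
  exact sum_congr rfl fun σ _ => stripKernelCount_congr hk fun p => hτ (σ p)

theorem natCast_card_stripSample :
    (Fintype.card (StripSample F K L k) : ℚ) =
      ((Fintype.card F : ℚ) - 1) ^ (k * L) * (K * L).factorial := by
  simp only [Fintype.card_prod, Fintype.card_fun, Fintype.card_fin, Fintype.card_perm,
    Nat.cast_mul, Nat.cast_pow, natCast_card_subtype_ne_zero, ← pow_mul, mul_comm k L]

theorem sum_card_filter_stripAnnihilates (hk : k ≤ K) (w : ℕ) :
    (∑ ω : StripSample F K L k, #{x ∈ ({x | hammingNorm x = w} : Finset (Fin (K * L) → F)) |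
        StripAnnihilates hk ω.1 (x ∘ ω.2)} : ℚ) =
      Fintype.card (StripSample F K L k) * ((fpoly (Fintype.card F) K k) ^ L).coeff w := by
  set W : Finset (Fin (K * L) → F) := {x | hammingNorm x = w}
  have hperm : ∀ a (σ : Equiv.Perm (Fin (K * L))),
      #{x ∈ W | StripAnnihilates hk a (x ∘ σ)} = #{y ∈ W | StripAnnihilates hk a y} :=
    fun a σ => card_equiv (σ.symm.arrowCongr (Equiv.refl F)) fun x => by
      show _ ↔ x ∘ σ ∈ {y ∈ W | StripAnnihilates hk a y}
      simp only [W, mem_filter, mem_univ, true_and, hammingNorm_comp_perm]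
  have hswap : ∀ σ : Equiv.Perm (Fin (K * L)),
      ∑ a, #{x ∈ W | StripAnnihilates hk a (x ∘ σ)} = ∑ y ∈ W, stripKernelCount hk y := by
    intro σ
    simp only [hperm, stripKernelCount, card_filter]
    exact sum_comm
  have hcount : ∑ ω : StripSample F K L k, #{x ∈ W | StripAnnihilates hk ω.1 (x ∘ ω.2)} =
      (K * L).factorial * ∑ y ∈ W, stripKernelCount hk y := by
    rw [Fintype.sum_prod_type_right]
    simp only [hswap, sum_const, card_univ, Fintype.card_perm, Fintype.card_fin, smul_eq_mul]
  have hgf := congrArg (coeff · w) (sum_stripKernelCount_mul_X_pow (F := F) (L := L) hk)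
  simp only [coeff_sum_C_mul_X_pow_hammingNorm, mul_pow, ← pow_mul, ← C_pow, coeff_C_mul] at hgf
  rw [← Nat.cast_sum, hcount, natCast_card_stripSample, Nat.cast_mul, Nat.cast_sum, hgf]
  ring

theorem sum_card_filter_forall_stripAnnihilates_div {ι : Type*} [Fintype ι] [DecidableEq ι]
    (Kj : ι → ℕ) (hKjK : ∀ j, Kj j ≤ K) {w : ℕ} (hwN : w ≤ K * L) :
    (∑ ω : (j : ι) → StripSample F K L (Kj j), #{x : Fin (K * L) → F |
        hammingNorm x = w ∧ ∀ j, StripAnnihilates (hKjK j) (ω j).1 (x ∘ (ω j).2)} : ℚ) /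
      Fintype.card ((j : ι) → StripSample F K L (Kj j)) =
    (#{x : Fin (K * L) → F | hammingNorm x = w} : ℚ) ^ (1 - (Fintype.card ι : ℤ)) *
      ∏ j, ((fpoly (Fintype.card F) K (Kj j)) ^ L).coeff w := by
  set W : Finset (Fin (K * L) → F) := {x | hammingNorm x = w}
  have hq1 : (Fintype.card F : ℚ) - 1 ≠ 0 :=
    sub_ne_zero.mpr (by exact_mod_cast Fintype.one_lt_card.ne')
  have hW0 : (#W : ℚ) ≠ 0 := by
    rw [natCast_card_hammingNorm_eq, Fintype.card_fin]
    exact mul_ne_zero (by exact_mod_cast (Nat.choose_pos hwN).ne') (pow_ne_zero _ hq1)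
  have hcancel : ∀ j, (Fintype.card (StripSample F K L (Kj j)) *
      ((fpoly (Fintype.card F) K (Kj j)) ^ L).coeff w / #W : ℚ) /
        Fintype.card (StripSample F K L (Kj j)) =
      ((fpoly (Fintype.card F) K (Kj j)) ^ L).coeff w / #W := fun j => by
    have : (Fintype.card (StripSample F K L (Kj j)) : ℚ) ≠ 0 := by
      rw [natCast_card_stripSample]
      exact mul_ne_zero (pow_ne_zero _ hq1) (by positivity)
    field_simp
  have hS : ∀ j, (∑ ω : StripSample F K L (Kj j),
      #{x ∈ W | StripAnnihilates (hKjK j) ω.1 (x ∘ ω.2)} : ℚ) =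
        Fintype.card (StripSample F K L (Kj j)) *
          ((fpoly (Fintype.card F) K (Kj j)) ^ L).coeff w :=
    fun j => sum_card_filter_stripAnnihilates (hKjK j) w
  simp only [← filter_filter]
  rw [sum_card_filter_forall_of_card_eq W _ fun j x hx x' hx' =>
      card_filter_stripAnnihilates_comp_congr (hKjK j)
        ((mem_filter.mp hx).2.trans (mem_filter.mp hx').2.symm)]
  simp only [hS, Fintype.card_pi, Nat.cast_prod]
  rw [mul_div_assoc, ← prod_div_distrib, prod_congr rfl fun j _ => hcancel j, prod_div_distrib,
    prod_const, card_univ, zpow_sub₀ hW0, zpow_one, zpow_natCast]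
  ring

end Strip

theorem stmt_7_general (F : Type*) [Field F] [Fintype F] [DecidableEq F]
    (q : ℕ) (hq : Fintype.card F = q) (K L J : ℕ)
    (Kj : Fin J → ℕ) (hKjK : ∀ j, Kj j ≤ K)
    (w : ℕ) (hwN : w ≤ K * L) :
    (∑ ω : (j : Fin J) →
        ((Fin L → Fin (Kj j) → {a : F // a ≠ 0}) × Equiv.Perm (Fin (K * L))),
        ((Finset.univ.filter
            (fun x : Fin (K * L) → F => hammingWt x = w ∧
              ∀ j : Fin J, ∀ t : Fin L, ∑ i : Fin (Kj j),
                ((ω j).1 t i : F) *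
                  x ((ω j).2 (stripIdx K L i.1 t.1 (lt_of_lt_of_le i.isLt (hKjK j))
                    t.isLt)) = 0)).card : ℚ)) /
      (Fintype.card ((j : Fin J) →
        ((Fin L → Fin (Kj j) → {a : F // a ≠ 0}) × Equiv.Perm (Fin (K * L)))) : ℚ)
      = ((q : ℚ) - 1) ^ ((w : ℤ) * (1 - (J : ℤ))) *
          (((K * L).choose w : ℚ)) ^ (1 - (J : ℤ)) *
          ∏ j : Fin J, ((fpoly q K (Kj j)) ^ L).coeff w := by
  subst hq
  have hW := natCast_card_hammingNorm_eq (F := F) (ι := Fin (K * L)) w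
  rw [Fintype.card_fin] at hW
  convert sum_card_filter_forall_stripAnnihilates_div Kj hKjK hwN using 2
  · congr! 4
  · rw [hW, Fintype.card_fin, mul_zpow, ← zpow_natCast, ← zpow_mul, mul_comm]

/-- Let `F` be a finite field with `q` elements, `K, L, J ≥ 1`, `N = K·L`, and
`1 ≤ K_j ≤ K` for `j = 1, …, J`. Let `H` be the random `(J·L)×N` matrix over `F` obtained
by stacking `J` independent random strips, the `j`-th strip built from the strip pattern
with parameters `(K, K_j, L)` with i.i.d. uniform nonzero labels and an independent uniform
column permutation (sample space `Ω = Π_j (labels_j × Perm (Fin N))`, uniform). Then for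
every `1 ≤ w ≤ N`, the expected number of `x ∈ F^N` with Hamming weight `w` and `Hx = 0`
equals `(q-1)^{w(1-J)} · binom(N,w)^{1-J} · Π_j f_{j,w}`, where `f_{j,w}` is the coefficient
of `s^w` in `f_j(s)^L`. -/
theorem stmt_7 (F : Type*) [Field F] [Fintype F] [DecidableEq F]
    (q : ℕ) (hq : Fintype.card F = q) (K L J : ℕ) (hK : 1 ≤ K) (hL : 1 ≤ L) (hJ : 1 ≤ J)
    (Kj : Fin J → ℕ) (hKj1 : ∀ j, 1 ≤ Kj j) (hKjK : ∀ j, Kj j ≤ K)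
    (w : ℕ) (hw1 : 1 ≤ w) (hwN : w ≤ K * L) :
    (∑ ω : (j : Fin J) →
        ((Fin L → Fin (Kj j) → {a : F // a ≠ 0}) × Equiv.Perm (Fin (K * L))),
        ((Finset.univ.filter
            (fun x : Fin (K * L) → F => hammingWt x = w ∧
              ∀ j : Fin J, ∀ t : Fin L, ∑ i : Fin (Kj j),
                ((ω j).1 t i : F) *
                  x ((ω j).2 (stripIdx K L i.1 t.1 (lt_of_lt_of_le i.isLt (hKjK j))
                    t.isLt)) = 0)).card : ℚ)) /
      (Fintype.card ((j : Fin J) →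
        ((Fin L → Fin (Kj j) → {a : F // a ≠ 0}) × Equiv.Perm (Fin (K * L)))) : ℚ)
      = ((q : ℚ) - 1) ^ ((w : ℤ) * (1 - (J : ℤ))) *
          (((K * L).choose w : ℚ)) ^ (1 - (J : ℤ)) *
          ∏ j : Fin J, ((fpoly q K (Kj j)) ^ L).coeff w :=
  stmt_7_general F q hq K L J Kj hKjK w hwN
end
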